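/- Let v be a symmetric d×d real matrix with eigenvalues λ₁(v), ..., λ_d(v), and let 0 ≤ δ ≤ K. Let A be the set of symmetric d×d matrices a such that δ|λ|² ≤ ⟨aλ,λ⟩ ≤ K|λ|² for all λ ∈ ℝ^d. Then sup_{a ∈ A} trace(a v) = ∑_{i=1}^d χ(λ_i(v)), where χ(λ) = Kλ for λ ≥ 0 and χ(λ) = δλ for λ ≤ 0. -/

import Mathlib

/-!
Diagonalise `v = U diag(λ) Uᵀ` with `U` orthogonal. Then `trace (a v) = ∑ᵢ ⟪a uᵢ, uᵢ⟫ λᵢ`, where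
the `uᵢ` are the (unit) columns of `U`, and `δ ≤ ⟪a uᵢ, uᵢ⟫ ≤ K` bounds each term by `χ(λᵢ)`.
The bound is attained by `a = U diag(f) Uᵀ` with `fᵢ = K` where `λᵢ ≥ 0` and `fᵢ = δ` elsewhere.
-/

open Matrix

lemma mul_le_max_mul_add_min_mul {δ q K x : ℝ} (hq : q ∈ Set.Icc δ K) :
    q * x ≤ K * max x 0 + δ * min x 0 := by
  rcases le_total 0 x with hx | hx
  · simpa [max_eq_left hx, min_eq_right hx] using mul_le_mul_of_nonneg_right hq.2 hx
  · simpa [max_eq_right hx, min_eq_left hx] using mul_le_mul_of_nonpos_right hq.1 hx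

lemma ite_nonneg_mul_eq_max_mul_add_min_mul (δ K x : ℝ) :
    (if 0 ≤ x then K else δ) * x = K * max x 0 + δ * min x 0 := by
  split_ifs with hx
  · simp [max_eq_left hx, min_eq_right hx]
  · simp [max_eq_right (not_le.mp hx).le, min_eq_left (not_le.mp hx).le]

namespace Matrix

variable {n R : Type*} [Fintype n]

section CommSemiring

variable [CommSemiring R]

lemma isSymm_mul_mul_transpose (U : Matrix n n R) {A : Matrix n n R} (hA : A.IsSymm) :
    (U * A * Uᵀ).IsSymm := by
  simp only [IsSymm, transpose_mul, transpose_transpose, hA.eq, Matrix.mul_assoc]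

lemma dotProduct_mul_mul_transpose_mulVec (U A : Matrix n n R) (x : n → R) :
    x ⬝ᵥ (U * A * Uᵀ) *ᵥ x = (Uᵀ *ᵥ x) ⬝ᵥ A *ᵥ (Uᵀ *ᵥ x) := by
  rw [← mulVec_mulVec, ← mulVec_mulVec, dotProduct_mulVec, mulVec_transpose]

lemma trace_mul_mul_diagonal_mul_transpose [DecidableEq n] (a U : Matrix n n R) (f : n → R) :
    (a * (U * diagonal f * Uᵀ)).trace = ∑ i, Uᵀ i ⬝ᵥ a *ᵥ Uᵀ i * f i := by
  rw [← Matrix.mul_assoc, trace_mul_cycle, ← Matrix.mul_assoc]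
  simp only [trace, diag, mul_diagonal, mul_mul_apply]

end CommSemiring

section Orthogonal

variable [CommRing R] [DecidableEq n] {U : Matrix n n R}

lemma dotProduct_transpose_mulVec_self_of_mem_orthogonalGroup (hU : U ∈ orthogonalGroup n R)
    (x : n → R) : (Uᵀ *ᵥ x) ⬝ᵥ (Uᵀ *ᵥ x) = x ⬝ᵥ x := by
  simpa [(mem_orthogonalGroup_iff n R).mp hU] using
    (dotProduct_mul_mul_transpose_mulVec U 1 x).symm

lemma transpose_row_dotProduct_self_of_mem_orthogonalGroup (hU : U ∈ orthogonalGroup n R)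
    (i : n) : Uᵀ i ⬝ᵥ Uᵀ i = 1 := by
  have h := congrFun (congrFun ((mem_orthogonalGroup_iff' n R).mp hU) i) i
  rwa [mul_apply', one_apply_eq] at h

lemma trace_mul_diagonal_conj_of_mem_orthogonalGroup (hU : U ∈ orthogonalGroup n R)
    (f g : n → R) : (U * diagonal f * Uᵀ * (U * diagonal g * Uᵀ)).trace = ∑ i, f i * g i := by
  have hUU := (mem_orthogonalGroup_iff' n R).mp hU
  have hprod : U * diagonal f * Uᵀ * (U * diagonal g * Uᵀ) = U * diagonal (f * g) * Uᵀ := by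
    simp only [Matrix.mul_assoc, ← Matrix.mul_assoc Uᵀ U, hUU, Matrix.one_mul,
      ← Matrix.mul_assoc (diagonal f), diagonal_mul_diagonal]
    rfl
  rw [hprod, trace_mul_cycle, hUU, Matrix.one_mul, trace_diagonal, Pi.mul_def]

end Orthogonal

section Ordered

variable [CommRing R] [LinearOrder R] [IsStrictOrderedRing R] [DecidableEq n] {δ K : R}
  {f : n → R}

lemma dotProduct_diagonal_mulVec_mem_Icc (hf : ∀ i, f i ∈ Set.Icc δ K) (x : n → R) :
    x ⬝ᵥ diagonal f *ᵥ x ∈ Set.Icc (δ * (x ⬝ᵥ x)) (K * (x ⬝ᵥ x)) := by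
  have hform : x ⬝ᵥ diagonal f *ᵥ x = ∑ i, f i * (x i * x i) := by
    simp only [dotProduct, mulVec_diagonal]
    exact Finset.sum_congr rfl fun i _ => by ring
  rw [hform]
  simp only [dotProduct, Finset.mul_sum]
  exact ⟨Finset.sum_le_sum fun i _ => mul_le_mul_of_nonneg_right (hf i).1 (mul_self_nonneg _),
    Finset.sum_le_sum fun i _ => mul_le_mul_of_nonneg_right (hf i).2 (mul_self_nonneg _)⟩

lemma mul_diagonal_mul_transpose_mem_Icc {U : Matrix n n R} (hU : U ∈ orthogonalGroup n R)
    (hf : ∀ i, f i ∈ Set.Icc δ K) (x : n → R) :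
    x ⬝ᵥ (U * diagonal f * Uᵀ) *ᵥ x ∈ Set.Icc (δ * (x ⬝ᵥ x)) (K * (x ⬝ᵥ x)) := by
  rw [dotProduct_mul_mul_transpose_mulVec,
    ← dotProduct_transpose_mulVec_self_of_mem_orthogonalGroup hU]
  exact dotProduct_diagonal_mulVec_mem_Icc hf _

end Ordered

variable [DecidableEq n]

lemma IsHermitian.exists_orthogonal_conj_diagonal {v : Matrix n n ℝ} (hv : v.IsHermitian) :
    ∃ U ∈ orthogonalGroup n ℝ, v = U * diagonal hv.eigenvalues * Uᵀ := by
  set U : Matrix n n ℝ := (hv.eigenvectorUnitary : Matrix n n ℝ)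
  have hstar : star U = Uᵀ := by
    rw [star_eq_conjTranspose, conjTranspose_eq_transpose_of_trivial]
  refine ⟨U, (mem_orthogonalGroup_iff n ℝ).mpr ?_, ?_⟩
  · rw [← hstar]
    exact Unitary.mul_star_self_of_mem hv.eigenvectorUnitary.2
  · rw [← hstar]
    simpa using hv.spectral_theorem

lemma trace_mul_mul_diagonal_mul_transpose_le {a U : Matrix n n ℝ} (hU : U ∈ orthogonalGroup n ℝ) {δ K : ℝ}
    (ha : ∀ x, x ⬝ᵥ a *ᵥ x ∈ Set.Icc (δ * (x ⬝ᵥ x)) (K * (x ⬝ᵥ x))) (g : n → ℝ) :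
    (a * (U * diagonal g * Uᵀ)).trace ≤ ∑ i, (K * max (g i) 0 + δ * min (g i) 0) := by
  rw [trace_mul_mul_diagonal_mul_transpose]
  refine Finset.sum_le_sum fun i _ => ?_
  have hi := ha (Uᵀ i)
  rw [transpose_row_dotProduct_self_of_mem_orthogonalGroup hU, mul_one, mul_one] at hi
  exact mul_le_max_mul_add_min_mul hi

end Matrix

open Matrix in
theorem sup_trace_over_matrix_interval_general (d : ℕ) (v : Matrix (Fin d) (Fin d) ℝ)
    (hv : v.IsHermitian) (δ K : ℝ) (hδK : δ ≤ K) :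
    sSup {t : ℝ | ∃ a : Matrix (Fin d) (Fin d) ℝ, a.IsSymm ∧
        (∀ l : Fin d → ℝ,
          δ * (l ⬝ᵥ l) ≤ l ⬝ᵥ a.mulVec l ∧ l ⬝ᵥ a.mulVec l ≤ K * (l ⬝ᵥ l)) ∧
        t = (a * v).trace}
      = ∑ i, (K * max (hv.eigenvalues i) 0 + δ * min (hv.eigenvalues i) 0) := by
  obtain ⟨U, hU, hv_eq⟩ := hv.exists_orthogonal_conj_diagonal
  generalize hv.eigenvalues = lam at hv_eq ⊢
  subst hv_eq
  set f : Fin d → ℝ := fun i => if 0 ≤ lam i then K else δ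
  have hf : ∀ i, f i ∈ Set.Icc δ K := fun i => by
    by_cases h : 0 ≤ lam i <;> simp [f, h, hδK]
  refine IsGreatest.csSup_eq
    ⟨⟨U * diagonal f * Uᵀ, isSymm_mul_mul_transpose U (isSymm_diagonal f),
      mul_diagonal_mul_transpose_mem_Icc hU hf, ?_⟩, ?_⟩
  · rw [trace_mul_diagonal_conj_of_mem_orthogonalGroup hU]
    simp only [f, ite_nonneg_mul_eq_max_mul_add_min_mul]
  · rintro t ⟨a, -, ha, rfl⟩
    exact trace_mul_mul_diagonal_mul_transpose_le hU ha lam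

open Matrix in
theorem sup_trace_over_matrix_interval (d : ℕ) (v : Matrix (Fin d) (Fin d) ℝ)
    (hv : v.IsHermitian) (δ K : ℝ) (h0 : 0 ≤ δ) (hδK : δ ≤ K) :
    sSup {t : ℝ | ∃ a : Matrix (Fin d) (Fin d) ℝ, a.IsSymm ∧
        (∀ l : Fin d → ℝ,
          δ * (l ⬝ᵥ l) ≤ l ⬝ᵥ a.mulVec l ∧ l ⬝ᵥ a.mulVec l ≤ K * (l ⬝ᵥ l)) ∧
        t = (a * v).trace}
      = ∑ i, (K * max (hv.eigenvalues i) 0 + δ * min (hv.eigenvalues i) 0) :=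
  sup_trace_over_matrix_interval_general d v hv δ K hδK
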